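/- Biased global convergence equivalence: for any bias τ : V → ℝ≥0, the τ-biased synchronous update sends every state to the all-Glory state in one step if and only if the biased hub domination condition holds everywhere; formally, (∀ state s, ∀ vertex v, next_heaven^τ(s, v) = Glory) ⟺ (∀ v ≠ g, hub_weight(v) + τ(v) ≥ rest_weight(v)). -/

import Mathlib

open Finset

inductive Vote where
  | Glory
  | Gnash
deriving DecidableEq

variable {V : Type*} [Fintype V] [DecidableEq V]

/-- Influence of the hub `g` on `v`. -/
def hubWeight (w : V → V → NNReal) (g v : V) : NNReal := w g v

/-- Total influence of all non-hub vertices on `v`. -/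
def restWeight (w : V → V → NNReal) (g v : V) : NNReal :=
  ∑ u ∈ Finset.univ.filter (fun u => u ≠ g), w u v

/-- The hub-forced state: agrees with `s` off the hub and is `Glory` at the hub. -/
def forceG (g : V) (s : V → Vote) : V → Vote :=
  fun u => if u = g then Vote.Glory else s u

/-- Weighted score of opinion `X` at vertex `v` in state `s`. -/
def score (w : V → V → NNReal) (X : Vote) (s : V → Vote) (v : V) : NNReal :=
  ∑ u, w u v * (if s u = X then 1 else 0)

/-- Synchronous update rule. -/
noncomputable def nextHeaven (w : V → V → NNReal) (g : V) (s : V → Vote) (v : V) : Vote :=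
  if v = g then Vote.Glory
  else if score w Vote.Glory (forceG g s) v < score w Vote.Gnash (forceG g s) v then
    Vote.Gnash
  else Vote.Glory

/-- τ-biased synchronous update rule. -/
noncomputable def nextHeavenTau (w : V → V → NNReal) (g : V) (τ : V → NNReal) (s : V → Vote) (v : V) : Vote :=
  if v = g then Vote.Glory
  else if score w Vote.Glory (forceG g s) v + τ v < score w Vote.Gnash (forceG g s) v then
    Vote.Gnash
  else Vote.Glory

/-- The state assigning `Gnash` to every vertex. -/
def allGnash : V → Vote := fun _ => Vote.Gnash

/-- The state assigning `Glory` to every vertex. -/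
def allGlory : V → Vote := fun _ => Vote.Glory

/-- Asynchronous update at a single vertex. -/
noncomputable def asyncStep (w : V → V → NNReal) (g : V) (s : V → Vote) (u : V) : V → Vote :=
  Function.update s u (nextHeaven w g s u)

/-!
In any hub-forced state the Glory score at `v` is at least the hub weight and the Gnash score at
most the rest weight, and the all-Gnash state attains both bounds. So it is the worst case: every
state is sent to all-Glory exactly when all-Gnash is, i.e. when the bias closes the gap between
rest weight and hub weight.
-/

theorem score_eq_sum_filter {W : Type*} [Fintype W] (w : W → W → NNReal) (X : Vote)
    (s : W → Vote) (v : W) :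
    score w X s v = ∑ u ∈ univ.filter (fun u => s u = X), w u v := by
  simp only [score, mul_ite, mul_one, mul_zero, sum_ite, sum_const_zero, add_zero]

section Scores

variable (w : V → V → NNReal) (g : V)

theorem score_gnash_forceG_le_restWeight (s : V → Vote) (v : V) :
    score w Vote.Gnash (forceG g s) v ≤ restWeight w g v := by
  rw [score_eq_sum_filter, restWeight]
  refine sum_le_sum_of_subset fun u hu => ?_
  rw [mem_filter_univ] at hu ⊢
  rintro rfl
  simp [forceG] at hu

theorem hubWeight_le_score_glory_forceG (s : V → Vote) (v : V) :
    hubWeight w g v ≤ score w Vote.Glory (forceG g s) v := by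
  rw [score_eq_sum_filter, hubWeight]
  exact single_le_sum (f := fun u => w u v) (fun _ _ => zero_le) (by simp [forceG])

theorem score_glory_forceG_allGnash (v : V) :
    score w Vote.Glory (forceG g allGnash) v = hubWeight w g v := by
  rw [score_eq_sum_filter, hubWeight, ← sum_singleton (fun u => w u v) g]
  congr 1
  ext u
  by_cases hu : u = g <;> simp [forceG, allGnash, hu]

theorem score_gnash_forceG_allGnash (v : V) :
    score w Vote.Gnash (forceG g allGnash) v = restWeight w g v := by
  rw [score_eq_sum_filter, restWeight]
  congr 1
  ext u
  by_cases hu : u = g <;> simp [forceG, allGnash, hu]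

theorem nextHeavenTau_eq_glory_iff (τ : V → NNReal) (s : V → Vote) {v : V} (hv : v ≠ g) :
    nextHeavenTau w g τ s v = Vote.Glory ↔
      score w Vote.Gnash (forceG g s) v ≤ score w Vote.Glory (forceG g s) v + τ v := by
  simp [nextHeavenTau, hv]

end Scores

theorem biased_global_conv_equiv (w : V → V → NNReal) (g : V) (τ : V → NNReal) :
    (∀ (s : V → Vote) (v : V), nextHeavenTau w g τ s v = Vote.Glory) ↔
      (∀ v ≠ g, hubWeight w g v + τ v ≥ restWeight w g v) := by
  constructor
  · intro h v hv
    have := (nextHeavenTau_eq_glory_iff w g τ allGnash hv).mp (h allGnash v)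
    rwa [score_glory_forceG_allGnash, score_gnash_forceG_allGnash] at this
  · intro h s v
    by_cases hv : v = g
    · simp [nextHeavenTau, hv]
    rw [nextHeavenTau_eq_glory_iff w g τ s hv]
    calc score w Vote.Gnash (forceG g s) v ≤ restWeight w g v :=
          score_gnash_forceG_le_restWeight w g s v
      _ ≤ hubWeight w g v + τ v := h v hv
      _ ≤ score w Vote.Glory (forceG g s) v + τ v :=
          add_le_add_left (hubWeight_le_score_glory_forceG w g s v) _
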